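/- arXiv:1009.6163 — 2 statements merged into one kernel-verified Lean document; each statement's English description precedes it below -/
import Mathlib

section
/- Let γ ∈ ℝ, 1 ≤ p, q ≤ ∞, and let L(n) : B^γ → X (n ≥ 0) be bounded linear operators defining the system x(n+1) = L(n)x_n + f(n). If the nonhomogeneous system is (ℓ^p,ℓ^q)-stable, then there exists a constant K ≥ 1 such that ‖x(·,0,0_B;f)‖_{ℓ^q} ≤ K ‖f‖_{ℓ^p} for every f ∈ ℓ^p(ℤ≥0, X). -/
open scoped ENNReal
open MeasureTheory

namespace BP

variable {X : Type*} [NormedAddCommGroup X] [NormedSpace ℝ X] [CompleteSpace X]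

/-- Weighted coordinate size: index `k : ℕ` represents the coordinate `−k ≤ 0`,
so the weight `e^{γ m}` becomes `e^{−γ k}`. -/
noncomputable def wnorm (γ : ℝ) (φ : ℕ → X) (k : ℕ) : ℝ := ‖φ k‖ * Real.exp (-(γ * k))

/-- Membership in the phase space `B^γ`. -/
def MemB (γ : ℝ) (φ : ℕ → X) : Prop := BddAbove (Set.range (wnorm γ φ))

/-- The `B^γ` norm `|φ|_{B^γ} = sup_{m ≤ 0} ‖φ(m)‖ e^{γ m}`. -/
noncomputable def Bnorm (γ : ℝ) (φ : ℕ → X) : ℝ := ⨆ k, wnorm γ φ k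

/-- The history `x_n` of `x : ℤ → X` at time `n` : coordinate `−k` is `x (n − k)`. -/
def hist (x : ℤ → X) (n : ℤ) : ℕ → X := fun k => x (n - k)

/-- `x = x(·, τ, φ; f)` is the solution of `x(n+1) = L(n) x_n + f(n)` (`n ≥ τ`), `x_τ = φ`. -/
def IsSolution (L : ℕ → ((ℕ → X) →ₗ[ℝ] X)) (f : ℕ → X) (τ : ℕ) (φ : ℕ → X)
    (x : ℤ → X) : Prop :=
  (∀ k : ℕ, x ((τ : ℤ) - k) = φ k) ∧
  (∀ n : ℕ, τ ≤ n → x ((n : ℤ) + 1) = L n (hist x (n : ℤ)) + f n)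

/-- Restriction of `x : ℤ → X` to `ℤ≥0`. -/
def restrict (x : ℤ → X) : ℕ → X := fun n => x (n : ℤ)

/-- The `ℓ^p(ℤ≥0, X)` norm (valued in `ℝ≥0∞`). -/
noncomputable def lpNorm (p : ℝ≥0∞) {E : Type*} [NormedAddCommGroup E] (f : ℕ → E) : ℝ≥0∞ :=
  eLpNorm f p Measure.count

/-- `L(n)` is a bounded operator from `B^γ` to `X`. -/
def OpBounded (γ : ℝ) (T : (ℕ → X) →ₗ[ℝ] X) : Prop :=
  ∃ C : ℝ, ∀ φ : ℕ → X, MemB γ φ → ‖T φ‖ ≤ C * Bnorm γ φ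

/-- The projection `P_{[−∞,−j]}` : keeps coordinates `−k` with `k ≥ j`. -/
def Ptail (j : ℕ) : (ℕ → X) →ₗ[ℝ] (ℕ → X) where
  toFun φ := fun k => if j ≤ k then φ k else 0
  map_add' φ ψ := by funext k; by_cases h : j ≤ k <;> simp [h]
  map_smul' c φ := by funext k; by_cases h : j ≤ k <;> simp [h]

/-- The projection `P_{[−j,0]}` : keeps coordinates `−k` with `k ≤ j`. -/
def Phead (j : ℕ) : (ℕ → X) →ₗ[ℝ] (ℕ → X) where
  toFun φ := fun k => if k ≤ j then φ k else 0
  map_add' φ ψ := by funext k; by_cases h : k ≤ j <;> simp [h]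
  map_smul' c φ := by funext k; by_cases h : k ≤ j <;> simp [h]

/-- `E_{−j} : X → B^γ`, placing `ψ` at coordinate `−j`. -/
def Ecoord (j : ℕ) : X →ₗ[ℝ] (ℕ → X) where
  toFun ψ := fun k => if k = j then ψ else 0
  map_add' ψ χ := by funext k; by_cases h : k = j <;> simp [h]
  map_smul' c ψ := by funext k; by_cases h : k = j <;> simp [h]

/-- The backward shift `S`. -/
def shiftS : (ℕ → X) →ₗ[ℝ] (ℕ → X) where
  toFun φ := fun k => if k = 0 then 0 else φ (k - 1)
  map_add' φ ψ := by funext k; by_cases h : k = 0 <;> simp [h]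
  map_smul' c φ := by funext k; by_cases h : k = 0 <;> simp [h]

/-- `D(n) = E₀ ∘ L(n) + S`. -/
def Dop (L : ℕ → ((ℕ → X) →ₗ[ℝ] X)) (n : ℕ) : (ℕ → X) →ₗ[ℝ] (ℕ → X) :=
  (Ecoord 0).comp (L n) + shiftS

/-- `h = H g`, `h(n) = Σ_{k=0}^{n−1} S^{n−k−1} (I − P₀) g(k)`. -/
noncomputable def Hop (g : ℕ → (ℕ → X)) : ℕ → (ℕ → X) :=
  fun n => ∑ k ∈ Finset.range n,
    ((shiftS ^ (n - k - 1) : (ℕ → X) →ₗ[ℝ] (ℕ → X))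
      ((LinearMap.id - Phead 0 : (ℕ → X) →ₗ[ℝ] (ℕ → X)) (g k)))

/-- `(ℓ^p, ℓ^q)`-stability of the nonhomogeneous system. -/
def lplqStable (L : ℕ → ((ℕ → X) →ₗ[ℝ] X)) (p q : ℝ≥0∞) : Prop :=
  ∀ f : ℕ → X, lpNorm p f < ∞ → ∀ x : ℤ → X, IsSolution L f 0 0 x →
    lpNorm q (restrict x) < ∞

/-- Uniform exponential stability in `X` w.r.t. `B^γ`. -/
def UESinX (γ : ℝ) (L : ℕ → ((ℕ → X) →ₗ[ℝ] X)) : Prop :=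
  ∃ K : ℝ, 1 ≤ K ∧ ∃ ν : ℝ, 0 < ν ∧
    ∀ (τ : ℕ) (φ : ℕ → X), MemB γ φ → ∀ x : ℤ → X, IsSolution L 0 τ φ x →
      ∀ n : ℕ, τ ≤ n → ‖x (n : ℤ)‖ ≤ K * Real.exp (-(ν * ((n : ℝ) - (τ : ℝ)))) * Bnorm γ φ

/-- Uniform exponential stability in `B^γ`. -/
def UESinB (γ : ℝ) (L : ℕ → ((ℕ → X) →ₗ[ℝ] X)) : Prop :=
  ∃ K : ℝ, 1 ≤ K ∧ ∃ ν : ℝ, 0 < ν ∧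
    ∀ (τ : ℕ) (φ : ℕ → X), MemB γ φ → ∀ x : ℤ → X, IsSolution L 0 τ φ x →
      ∀ n : ℕ, τ ≤ n →
        Bnorm γ (hist x (n : ℤ)) ≤ K * Real.exp (-(ν * ((n : ℝ) - (τ : ℝ)))) * Bnorm γ φ

/-- Uniform stability in `X` w.r.t. `B^γ`. -/
def USinX (γ : ℝ) (L : ℕ → ((ℕ → X) →ₗ[ℝ] X)) : Prop :=
  ∃ K : ℝ, 1 ≤ K ∧
    ∀ (τ : ℕ) (φ : ℕ → X), MemB γ φ → ∀ x : ℤ → X, IsSolution L 0 τ φ x →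
      ∀ n : ℕ, τ ≤ n → ‖x (n : ℤ)‖ ≤ K * Bnorm γ φ

/-- Uniform stability in `B^γ`. -/
def USinB (γ : ℝ) (L : ℕ → ((ℕ → X) →ₗ[ℝ] X)) : Prop :=
  ∃ K : ℝ, 1 ≤ K ∧
    ∀ (τ : ℕ) (φ : ℕ → X), MemB γ φ → ∀ x : ℤ → X, IsSolution L 0 τ φ x →
      ∀ n : ℕ, τ ≤ n → Bnorm γ (hist x (n : ℤ)) ≤ K * Bnorm γ φ

/-- Condition (★): there exists `m ≤ 0` (here `m = −j`, `j : ℕ`) such that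
`sup_{n ≥ 0} ‖L(n) P_{[−∞,m]}‖_{B^γ→X} < ∞`. -/
def StarCond (γ : ℝ) (L : ℕ → ((ℕ → X) →ₗ[ℝ] X)) : Prop :=
  ∃ (j : ℕ) (C : ℝ), ∀ (n : ℕ) (φ : ℕ → X), MemB γ φ → ‖L n (Ptail j φ)‖ ≤ C * Bnorm γ φ

/-- `z` solves the first order system `z(n+1) = A(n) z(n)` (`n ≥ τ`), `z(τ) = ψ`. -/
def IsFOSol (A : ℕ → ((ℕ → X) →ₗ[ℝ] (ℕ → X))) (τ : ℕ) (ψ : ℕ → X)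
    (z : ℕ → (ℕ → X)) : Prop :=
  z τ = ψ ∧ ∀ n : ℕ, τ ≤ n → z (n + 1) = A n (z n)

/-- Uniform exponential stability of the first order system in `B^γ`. -/
def FOUES (γ : ℝ) (A : ℕ → ((ℕ → X) →ₗ[ℝ] (ℕ → X))) : Prop :=
  ∃ K : ℝ, 1 ≤ K ∧ ∃ ν : ℝ, 0 < ν ∧
    ∀ (τ : ℕ) (ψ : ℕ → X), MemB γ ψ → ∀ z : ℕ → (ℕ → X), IsFOSol A τ ψ z →
      ∀ n : ℕ, τ ≤ n →
        Bnorm γ (z n) ≤ K * Real.exp (-(ν * ((n : ℝ) - (τ : ℝ)))) * Bnorm γ ψ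

/-- Uniform stability of the first order system in `B^γ`. -/
def FOUS (γ : ℝ) (A : ℕ → ((ℕ → X) →ₗ[ℝ] (ℕ → X))) : Prop :=
  ∃ K : ℝ, 1 ≤ K ∧
    ∀ (τ : ℕ) (ψ : ℕ → X), MemB γ ψ → ∀ z : ℕ → (ℕ → X), IsFOSol A τ ψ z →
      ∀ n : ℕ, τ ≤ n → Bnorm γ (z n) ≤ K * Bnorm γ ψ

/-- The associated subdiagonal system: `L_sub(0) = 0`, `L_sub(n) = L(n) P_{[−n+1,0]}`. -/
def Lsub (L : ℕ → ((ℕ → X) →ₗ[ℝ] X)) : ℕ → ((ℕ → X) →ₗ[ℝ] X) :=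
  fun n => if n = 0 then 0 else (L n).comp (Phead (n - 1))

/-- The system has bounded delay of order `d`. -/
def BoundedDelay (L : ℕ → ((ℕ → X) →ₗ[ℝ] X)) (d : ℕ) : Prop :=
  ∀ n : ℕ, ∃ A : Fin d → (X →L[ℝ] X), ∀ φ : ℕ → X, L n φ = ∑ k : Fin d, A k (φ k)

/-! ### Auxiliary development for statement 8 -/

section Statement8Aux

/-- The canonical solution on `ℕ`, by strong recursion. -/
noncomputable def solN (L : ℕ → ((ℕ → X) →ₗ[ℝ] X)) (f : ℕ → X) : ℕ → X
  | 0 => 0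
  | n + 1 => L n (fun k => if k ≤ n then solN L f (n - k) else 0) + f n
  termination_by n => n
  decreasing_by omega

lemma solN_zero (L : ℕ → ((ℕ → X) →ₗ[ℝ] X)) (f : ℕ → X) : solN L f 0 = 0 := by
  rw [solN]

lemma solN_succ (L : ℕ → ((ℕ → X) →ₗ[ℝ] X)) (f : ℕ → X) (n : ℕ) :
    solN L f (n + 1) = L n (fun k => if k ≤ n then solN L f (n - k) else 0) + f n := by
  rw [solN]

/-- The canonical solution on `ℤ`. -/
noncomputable def sol (L : ℕ → ((ℕ → X) →ₗ[ℝ] X)) (f : ℕ → X) : ℤ → X :=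
  fun m => if 0 ≤ m then solN L f m.toNat else 0

lemma sol_coe (L : ℕ → ((ℕ → X) →ₗ[ℝ] X)) (f : ℕ → X) (n : ℕ) :
    sol L f (n : ℤ) = solN L f n := by simp [sol]

lemma sol_neg (L : ℕ → ((ℕ → X) →ₗ[ℝ] X)) (f : ℕ → X) {m : ℤ} (hm : m < 0) :
    sol L f m = 0 := by simp [sol, not_le.mpr hm]

lemma restrict_sol (L : ℕ → ((ℕ → X) →ₗ[ℝ] X)) (f : ℕ → X) :
    restrict (sol L f) = solN L f := funext fun n => sol_coe L f n

lemma hist_sol (L : ℕ → ((ℕ → X) →ₗ[ℝ] X)) (f : ℕ → X) (n : ℕ) :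
    hist (sol L f) (n : ℤ) = fun k => if k ≤ n then solN L f (n - k) else 0 := by
  funext k
  by_cases hk : k ≤ n
  · have h1 : (n : ℤ) - (k : ℤ) = ((n - k : ℕ) : ℤ) := by omega
    rw [hist, h1, sol_coe, if_pos hk]
  · have h1 : (n : ℤ) - (k : ℤ) < 0 := by omega
    rw [hist, sol_neg L f h1, if_neg hk]

lemma sol_isSolution (L : ℕ → ((ℕ → X) →ₗ[ℝ] X)) (f : ℕ → X) :
    IsSolution L f 0 0 (sol L f) := by
  constructor
  · intro k
    show sol L f ((0 : ℤ) - (k : ℤ)) = 0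
    rcases Nat.eq_zero_or_pos k with h | h
    · subst h
      show sol L f ((0:ℤ) - (0:ℤ)) = 0
      norm_num
      rw [show (0:ℤ) = ((0:ℕ) : ℤ) from rfl, sol_coe, solN_zero]
    · exact sol_neg L f (by omega)
  · intro n _
    have h1 : (n : ℤ) + 1 = ((n + 1 : ℕ) : ℤ) := by push_cast; ring
    rw [h1, sol_coe, solN_succ, hist_sol]

lemma sol_unique {L : ℕ → ((ℕ → X) →ₗ[ℝ] X)} {f : ℕ → X} {x : ℤ → X}
    (hx : IsSolution L f 0 0 x) : ∀ m : ℤ, x m = sol L f m := by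
  have hneg : ∀ m : ℤ, m ≤ 0 → x m = 0 := by
    intro m hm
    have h := hx.1 (-m).toNat
    have h1 : (((0:ℕ)) : ℤ) - ((-m).toNat : ℤ) = m := by omega
    rw [h1] at h
    simpa using h
  have key : ∀ n : ℕ, ∀ m : ℤ, m ≤ (n : ℤ) → x m = sol L f m := by
    intro n
    induction n with
    | zero =>
      intro m hm
      have hm0 : m ≤ 0 := by exact_mod_cast hm
      rw [hneg m hm0]
      rcases hm0.lt_or_eq with h | h
      · rw [sol_neg L f h]
      · subst h
        rw [show (0:ℤ) = ((0:ℕ) : ℤ) from rfl, sol_coe, solN_zero]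
    | succ n ih =>
      intro m hm
      by_cases h : m ≤ (n : ℤ)
      · exact ih m h
      · have hm' : m = (n : ℤ) + 1 := by omega
        subst hm'
        have e1 := hx.2 n (Nat.zero_le n)
        have e2 := (sol_isSolution L f).2 n (Nat.zero_le n)
        have hh : hist x (n : ℤ) = hist (sol L f) (n : ℤ) := by
          funext k
          exact ih ((n : ℤ) - (k : ℤ)) (by omega)
        rw [e1, hh, ← e2]
  intro m
  rcases le_or_gt m 0 with h | h
  · exact key 0 m (by exact_mod_cast h)
  · exact key m.toNat m (by omega)

lemma solN_add (L : ℕ → ((ℕ → X) →ₗ[ℝ] X)) (f g : ℕ → X) (n : ℕ) :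
    solN L (f + g) n = solN L f n + solN L g n := by
  induction n using Nat.strong_induction_on with
  | _ n ih =>
    match n with
    | 0 => simp [solN_zero]
    | n + 1 =>
      rw [solN_succ, solN_succ, solN_succ]
      have hfun : (fun k => if k ≤ n then solN L (f + g) (n - k) else 0)
          = (fun k => if k ≤ n then solN L f (n - k) else 0)
            + (fun k => if k ≤ n then solN L g (n - k) else 0) := by
        funext k
        by_cases hk : k ≤ n
        · simp [hk, ih (n - k) (by omega)]
        · simp [hk]
      rw [hfun, map_add, Pi.add_apply]
      abel

lemma solN_smul (L : ℕ → ((ℕ → X) →ₗ[ℝ] X)) (c : ℝ) (f : ℕ → X) (n : ℕ) :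
    solN L (c • f) n = c • solN L f n := by
  induction n using Nat.strong_induction_on with
  | _ n ih =>
    match n with
    | 0 => simp [solN_zero]
    | n + 1 =>
      rw [solN_succ, solN_succ]
      have hfun : (fun k => if k ≤ n then solN L (c • f) (n - k) else 0)
          = c • (fun k => if k ≤ n then solN L f (n - k) else 0) := by
        funext k
        by_cases hk : k ≤ n
        · simp [hk, ih (n - k) (by omega)]
        · simp [hk]
      rw [hfun, _root_.map_smul, Pi.smul_apply, smul_add]

lemma solN_sub (L : ℕ → ((ℕ → X) →ₗ[ℝ] X)) (f g : ℕ → X) (n : ℕ) :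
    solN L (f - g) n = solN L f n - solN L g n := by
  have h := solN_add L (f - g) g n
  rw [sub_add_cancel] at h
  rw [h]; abel

lemma bnorm_nonneg {γ : ℝ} {φ : ℕ → X} : 0 ≤ Bnorm γ φ :=
  Real.iSup_nonneg fun k => mul_nonneg (norm_nonneg _) (Real.exp_pos _).le

lemma solN_bound (γ : ℝ) (L : ℕ → ((ℕ → X) →ₗ[ℝ] X)) (hL : ∀ n, OpBounded γ (L n)) (n : ℕ) :
    ∃ C : ℝ, 0 ≤ C ∧ ∀ f : ℕ → X, ∀ m, m ≤ n →
      ‖solN L f m‖ ≤ C * ∑ i ∈ Finset.range n, ‖f i‖ := by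
  induction n with
  | zero =>
    refine ⟨0, le_refl 0, ?_⟩
    intro f m hm
    interval_cases m
    simp [solN_zero]
  | succ n ih =>
    obtain ⟨C, hC0, hC⟩ := ih
    obtain ⟨CL, hCL⟩ := hL n
    set CL' := max CL 0 with hCL'def
    have hCL'0 : 0 ≤ CL' := le_max_right _ _
    set E := ∑ k ∈ Finset.range (n + 1), Real.exp (-(γ * k)) with hEdef
    have hE0 : 0 ≤ E := Finset.sum_nonneg fun _ _ => (Real.exp_pos _).le
    refine ⟨CL' * C * E + 1 + C, by positivity, ?_⟩
    intro f m hm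
    set S0 := ∑ i ∈ Finset.range n, ‖f i‖ with hS0def
    set S1 := ∑ i ∈ Finset.range (n + 1), ‖f i‖ with hS1def
    have hS00 : 0 ≤ S0 := Finset.sum_nonneg fun _ _ => norm_nonneg _
    have hSmono : S0 ≤ S1 := by
      rw [hS0def, hS1def]
      exact Finset.sum_le_sum_of_subset_of_nonneg
        (Finset.range_subset_range.mpr (Nat.le_succ n)) (fun i _ _ => norm_nonneg _)
    have hS10 : 0 ≤ S1 := le_trans hS00 hSmono
    have haux : 0 ≤ CL' * C * E := by positivity
    by_cases hmn : m ≤ n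
    · calc ‖solN L f m‖ ≤ C * S0 := hC f m hmn
        _ ≤ C * S1 := mul_le_mul_of_nonneg_left hSmono hC0
        _ ≤ (CL' * C * E + 1 + C) * S1 := by nlinarith
    · have hm' : m = n + 1 := by omega
      subst hm'
      set ψ : ℕ → X := fun k => if k ≤ n then solN L f (n - k) else 0 with hψdef
      have hw : ∀ k, wnorm γ ψ k ≤ (C * S0) * E := by
        intro k
        rw [wnorm]
        by_cases hk : k ≤ n
        · have h1 : ‖ψ k‖ ≤ C * S0 := by
            rw [hψdef]; simp only [if_pos hk]; exact hC f (n - k) (by omega)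
          have h2 : Real.exp (-(γ * k)) ≤ E := by
            rw [hEdef]
            exact Finset.single_le_sum (f := fun j : ℕ => Real.exp (-(γ * j)))
              (fun i _ => (Real.exp_pos _).le) (Finset.mem_range.mpr (by omega))
          calc ‖ψ k‖ * Real.exp (-(γ * k)) ≤ (C * S0) * Real.exp (-(γ * k)) :=
                mul_le_mul_of_nonneg_right h1 (Real.exp_pos _).le
            _ ≤ (C * S0) * E := mul_le_mul_of_nonneg_left h2 (mul_nonneg hC0 hS00)
        · have : ψ k = 0 := by rw [hψdef]; simp [hk]
          rw [this, norm_zero, zero_mul]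
          positivity
      have hmem : MemB γ ψ := ⟨(C * S0) * E, by rintro y ⟨k, rfl⟩; exact hw k⟩
      have hBn : Bnorm γ ψ ≤ (C * S0) * E := ciSup_le hw
      have hBn0 : 0 ≤ Bnorm γ ψ := bnorm_nonneg
      have hLψ : ‖L n ψ‖ ≤ CL' * ((C * S0) * E) :=
        calc ‖L n ψ‖ ≤ CL * Bnorm γ ψ := hCL ψ hmem
          _ ≤ CL' * Bnorm γ ψ := mul_le_mul_of_nonneg_right (le_max_left _ _) hBn0
          _ ≤ CL' * ((C * S0) * E) := mul_le_mul_of_nonneg_left hBn hCL'0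
      have hfn : ‖f n‖ ≤ S1 := by
        rw [hS1def]
        exact Finset.single_le_sum (fun i _ => norm_nonneg _)
          (Finset.mem_range.mpr (by omega))
      rw [solN_succ, ← hψdef]
      calc ‖L n ψ + f n‖ ≤ ‖L n ψ‖ + ‖f n‖ := norm_add_le _ _
        _ ≤ CL' * ((C * S0) * E) + S1 := add_le_add hLψ hfn
        _ ≤ (CL' * C * E + 1 + C) * S1 := by nlinarith

/-! ### Bridging `lpNorm` (counting measure) with the `lp` spaces -/

lemma lpNorm_top_eq (h : ℕ → X) : lpNorm ∞ h = ⨆ n, (‖h n‖₊ : ℝ≥0∞) := by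
  rw [lpNorm, eLpNorm_exponent_top, eLpNormEssSup, essSup_count]
  rfl

lemma lpNorm_ne_top_eq {p : ℝ≥0∞} (hp0 : p ≠ 0) (hpt : p ≠ ∞) (h : ℕ → X) :
    lpNorm p h = (∑' n, (((‖h n‖₊ ^ p.toReal : NNReal)) : ℝ≥0∞)) ^ (1 / p.toReal) := by
  rw [lpNorm, eLpNorm_eq_eLpNorm' hp0 hpt, eLpNorm', MeasureTheory.lintegral_count]
  congr 1
  exact tsum_congr fun n => (ENNReal.coe_rpow_of_nonneg _ ENNReal.toReal_nonneg).symm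

lemma one_le_ne_zero {p : ℝ≥0∞} (hp : 1 ≤ p) : p ≠ 0 := by
  intro h0; rw [h0] at hp; simp at hp

lemma memℓp_iff_lpNorm_lt_top {p : ℝ≥0∞} (hp : 1 ≤ p) (h : ℕ → X) :
    Memℓp h p ↔ lpNorm p h < ∞ := by
  have hp0 : p ≠ 0 := one_le_ne_zero hp
  by_cases hpt : p = ∞
  · subst hpt
    rw [lpNorm_top_eq, memℓp_infty_iff]
    constructor
    · rintro ⟨b, hb⟩
      have hle : (⨆ n, (‖h n‖₊ : ℝ≥0∞)) ≤ ENNReal.ofReal b := by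
        refine iSup_le fun n => ?_
        rw [← enorm_eq_nnnorm, ← ofReal_norm]
        exact ENNReal.ofReal_le_ofReal (hb ⟨n, rfl⟩)
      exact lt_of_le_of_lt hle ENNReal.ofReal_lt_top
    · intro hlt
      refine ⟨(⨆ n, (‖h n‖₊ : ℝ≥0∞)).toReal, ?_⟩
      rintro y ⟨n, rfl⟩
      have h1 : (‖h n‖₊ : ℝ≥0∞) ≤ ⨆ n, (‖h n‖₊ : ℝ≥0∞) := le_iSup (fun n => ((‖h n‖₊ : ℝ≥0∞))) n
      have h2 := ENNReal.toReal_mono (ne_of_lt hlt) h1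
      simpa using h2
  · have hr : 0 < p.toReal := ENNReal.toReal_pos hp0 hpt
    rw [lpNorm_ne_top_eq hp0 hpt, memℓp_gen_iff hr,
      ENNReal.rpow_lt_top_iff_of_pos (by positivity : (0:ℝ) < 1 / p.toReal),
      lt_top_iff_ne_top, ENNReal.tsum_coe_ne_top_iff_summable]
    have heq : (fun n => ((‖h n‖₊ ^ p.toReal : NNReal) : ℝ)) = fun n => ‖h n‖ ^ p.toReal := by
      funext n; rw [NNReal.coe_rpow, coe_nnnorm]
    rw [← NNReal.summable_coe, heq]

lemma lpNorm_coe_lp {p : ℝ≥0∞} (hp : 1 ≤ p) (f : lp (fun _ : ℕ => X) p) :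
    lpNorm p (⇑f) = ENNReal.ofReal ‖f‖ := by
  have hp0 : p ≠ 0 := one_le_ne_zero hp
  by_cases hpt : p = ∞
  · subst hpt
    rw [lpNorm_top_eq, lp.norm_eq_ciSup]
    have hbdd : BddAbove (Set.range fun n => ‖f n‖) := memℓp_infty_iff.mp (lp.memℓp f)
    have hbdd' : BddAbove (Set.range fun n => ‖f n‖₊) := by
      obtain ⟨b, hb⟩ := hbdd
      refine ⟨b.toNNReal, ?_⟩
      rintro y ⟨n, rfl⟩
      have h1 : ‖f n‖ ≤ b := hb ⟨n, rfl⟩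
      show ‖f n‖₊ ≤ b.toNNReal
      rw [← norm_toNNReal]
      exact Real.toNNReal_mono h1
    rw [← ENNReal.coe_iSup hbdd', ← ENNReal.ofReal_coe_nnreal]
    congr 1
    rw [NNReal.coe_iSup]
    simp [coe_nnnorm]
  · have hr : 0 < p.toReal := ENNReal.toReal_pos hp0 hpt
    have hsum : Summable (fun n => ‖f n‖ ^ p.toReal) := (memℓp_gen_iff hr).mp (lp.memℓp f)
    rw [lpNorm_ne_top_eq hp0 hpt, lp.norm_eq_tsum_rpow hr f,
      ← ENNReal.ofReal_rpow_of_nonneg (tsum_nonneg fun n => by positivity)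
        (by positivity : (0:ℝ) ≤ 1 / p.toReal)]
    congr 1
    rw [ENNReal.ofReal_tsum_of_nonneg (fun n => by positivity) hsum]
    refine tsum_congr fun n => ?_
    rw [ENNReal.coe_rpow_of_nonneg _ hr.le, ← enorm_eq_nnnorm, ← ofReal_norm,
      ENNReal.ofReal_rpow_of_nonneg (norm_nonneg _) hr.le]

end Statement8Aux

/-- Proposition 2.7: `(ℓ^p,ℓ^q)`-stability yields a uniform bound
`‖x(·,0,0_B;f)‖_{ℓ^q} ≤ K ‖f‖_{ℓ^p}`. -/
theorem statement8 (γ : ℝ) (p q : ℝ≥0∞) (hp : 1 ≤ p) (hq : 1 ≤ q)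
    (L : ℕ → ((ℕ → X) →ₗ[ℝ] X)) (hL : ∀ n, OpBounded γ (L n))
    (hst : lplqStable L p q) :
    ∃ K : ℝ, 1 ≤ K ∧ ∀ f : ℕ → X, lpNorm p f < ∞ →
      ∀ x : ℤ → X, IsSolution L f 0 0 x →
        lpNorm q (restrict x) ≤ ENNReal.ofReal K * lpNorm p f := by
  haveI : Fact (1 ≤ p) := ⟨hp⟩
  haveI : Fact (1 ≤ q) := ⟨hq⟩
  have hp0 : p ≠ 0 := one_le_ne_zero hp
  have hmem : ∀ F : lp (fun _ : ℕ => X) p, Memℓp (restrict (sol L ⇑F)) q := by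
    intro F
    apply (memℓp_iff_lpNorm_lt_top hq _).mpr
    refine hst ⇑F ?_ (sol L ⇑F) (sol_isSolution L ⇑F)
    rw [lpNorm_coe_lp hp]
    exact ENNReal.ofReal_lt_top
  let T : lp (fun _ : ℕ => X) p →ₗ[ℝ] lp (fun _ : ℕ => X) q :=
    { toFun := fun F => ⟨restrict (sol L ⇑F), hmem F⟩
      map_add' := fun F G => by
        apply lp.ext
        funext n
        have h1 : (⇑(F + G) : ℕ → X) = ⇑F + ⇑G := lp.coeFn_add F G
        show restrict (sol L ⇑(F + G)) n
          = (restrict (sol L ⇑F) + restrict (sol L ⇑G)) n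
        rw [h1]
        simp only [restrict_sol, Pi.add_apply]
        exact solN_add L ⇑F ⇑G n
      map_smul' := fun c F => by
        apply lp.ext
        funext n
        have h1 : (⇑(c • F) : ℕ → X) = c • ⇑F := lp.coeFn_smul c F
        show restrict (sol L ⇑(c • F)) n = (c • restrict (sol L ⇑F)) n
        rw [h1]
        simp only [restrict_sol, Pi.smul_apply]
        exact solN_smul L c ⇑F n }
  have hTcoe : ∀ F : lp (fun _ : ℕ => X) p, (⇑(T F) : ℕ → X) = solN L ⇑F :=
    fun F => restrict_sol L ⇑F
  have hcont : Continuous T := by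
    apply LinearMap.continuous_of_seq_closed_graph
    intro u F G hu hTu
    have hpt : ∀ i : ℕ, Filter.Tendsto (fun j => (u j : ℕ → X) i)
        Filter.atTop (nhds ((F : ℕ → X) i)) := by
      intro i
      rw [tendsto_iff_norm_sub_tendsto_zero]
      have hb : ∀ j, ‖(u j : ℕ → X) i - (F : ℕ → X) i‖ ≤ ‖u j - F‖ := by
        intro j
        have h := lp.norm_apply_le_norm hp0 (u j - F) i
        rwa [lp.coeFn_sub, Pi.sub_apply] at h
      exact squeeze_zero (fun j => norm_nonneg _) hb
        (tendsto_iff_norm_sub_tendsto_zero.mp hu)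
    have hsol : ∀ i : ℕ, Filter.Tendsto (fun j => (T (u j) : ℕ → X) i)
        Filter.atTop (nhds ((T F : ℕ → X) i)) := by
      intro i
      simp only [hTcoe]
      obtain ⟨C, hC0, hC⟩ := solN_bound γ L hL i
      rw [tendsto_iff_norm_sub_tendsto_zero]
      have hb : ∀ j, ‖solN L (⇑(u j)) i - solN L (⇑F) i‖
          ≤ C * ∑ k ∈ Finset.range i, ‖(u j : ℕ → X) k - (F : ℕ → X) k‖ := by
        intro j
        rw [← solN_sub]
        have h := hC (⇑(u j) - ⇑F) i (le_refl i)
        simpa using h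
      apply squeeze_zero (fun j => norm_nonneg _) hb
      have hsum : Filter.Tendsto
          (fun j => ∑ k ∈ Finset.range i, ‖(u j : ℕ → X) k - (F : ℕ → X) k‖)
          Filter.atTop (nhds 0) := by
        have h := tendsto_finset_sum (Finset.range i)
          (fun k _ => tendsto_iff_norm_sub_tendsto_zero.mp (hpt k))
        simpa using h
      simpa using hsum.const_mul C
    have hptG : ∀ i : ℕ, Filter.Tendsto (fun j => (T (u j) : ℕ → X) i)
        Filter.atTop (nhds ((G : ℕ → X) i)) := by
      intro i
      rw [tendsto_iff_norm_sub_tendsto_zero]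
      have hb : ∀ j, ‖(T (u j) : ℕ → X) i - (G : ℕ → X) i‖ ≤ ‖T (u j) - G‖ := by
        intro j
        have h := lp.norm_apply_le_norm (one_le_ne_zero hq) (T (u j) - G) i
        rwa [lp.coeFn_sub, Pi.sub_apply] at h
      exact squeeze_zero (fun j => norm_nonneg _) hb
        (tendsto_iff_norm_sub_tendsto_zero.mp hTu)
    apply lp.ext
    funext i
    exact tendsto_nhds_unique (hptG i) (hsol i)
  let T' : lp (fun _ : ℕ => X) p →L[ℝ] lp (fun _ : ℕ => X) q := ⟨T, hcont⟩
  refine ⟨max ‖T'‖ 1, le_max_right _ _, ?_⟩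
  intro f hf x hx
  have hfm : Memℓp f p := (memℓp_iff_lpNorm_lt_top hp f).mpr hf
  set F : lp (fun _ : ℕ => X) p := ⟨f, hfm⟩ with hFdef
  have hFcoe : (⇑F : ℕ → X) = f := rfl
  have hxr : restrict x = (⇑(T F) : ℕ → X) := by
    funext n
    show x (n : ℤ) = (⇑(T F) : ℕ → X) n
    rw [sol_unique hx (n : ℤ)]
    have h1 : (⇑(T F) : ℕ → X) n = restrict (sol L ⇑F) n := rfl
    rw [h1, hFcoe]
    rfl
  calc lpNorm q (restrict x) = lpNorm q (⇑(T F)) := by rw [hxr]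
    _ = ENNReal.ofReal ‖T F‖ := lpNorm_coe_lp hq (T F)
    _ ≤ ENNReal.ofReal (max ‖T'‖ 1 * ‖F‖) := by
        apply ENNReal.ofReal_le_ofReal
        calc ‖T F‖ = ‖T' F‖ := rfl
          _ ≤ ‖T'‖ * ‖F‖ := T'.le_opNorm F
          _ ≤ max ‖T'‖ 1 * ‖F‖ :=
              mul_le_mul_of_nonneg_right (le_max_left _ _) (norm_nonneg _)
    _ = ENNReal.ofReal (max ‖T'‖ 1) * ENNReal.ofReal ‖F‖ :=
        ENNReal.ofReal_mul (le_trans zero_le_one (le_max_right _ _))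
    _ = ENNReal.ofReal (max ‖T'‖ 1) * lpNorm p f := by
        rw [← lpNorm_coe_lp hp F, hFcoe]


end BP
end

section
/- Let 1 ≤ p ≤ ∞, γ > 0, and let x : ℤ → X be such that x_0 ∈ B^γ. Then the sequence of histories (x_n)_{n≥0} belongs to ℓ^p(ℤ≥0, B^γ) if and only if (x(n))_{n≥0} belongs to ℓ^p(ℤ≥0, X). More precisely: for p = ∞, ‖x(·)‖_∞ ≤ ‖x_•‖_∞ = max{ |x_0|_{B^γ}, ‖x(·)‖_∞ }; and for 1 ≤ p < ∞, ‖x(·)‖_p^p ≤ ‖x_•‖_p^p ≤ (1 − e^{−pγ})^{−1} ( |x_0|_{B^γ}^p + ‖x(·)‖_p^p ), where ‖x(·)‖_p denotes the ℓ^p(ℤ≥0, X)-norm of (x(n))_{n≥0} and ‖x_•‖_p the ℓ^p(ℤ≥0, B^γ)-norm of (x_n)_{n≥0}. -/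
open scoped ENNReal
open MeasureTheory

namespace BP

variable {X : Type*} [NormedAddCommGroup X] [NormedSpace ℝ X] [CompleteSpace X]

section AuxLemmas
set_option linter.unusedSectionVars false
variable {X : Type*} [NormedAddCommGroup X] [NormedSpace ℝ X] [CompleteSpace X]

lemma wnorm_nonneg (γ : ℝ) (φ : ℕ → X) (k : ℕ) : 0 ≤ wnorm γ φ k :=
  mul_nonneg (norm_nonneg _) (Real.exp_pos _).le

lemma wnorm_le_Bnorm {γ : ℝ} {φ : ℕ → X} (h : MemB γ φ) (k : ℕ) : wnorm γ φ k ≤ Bnorm γ φ :=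
  le_ciSup h k

lemma Bnorm_nonneg {γ : ℝ} {φ : ℕ → X} (h : MemB γ φ) : 0 ≤ Bnorm γ φ :=
  le_trans (wnorm_nonneg γ φ 0) (wnorm_le_Bnorm h 0)

lemma Bnorm_le {γ : ℝ} {φ : ℕ → X} {c : ℝ} (h : ∀ k, wnorm γ φ k ≤ c) : Bnorm γ φ ≤ c :=
  ciSup_le h

lemma wnorm_zero (γ : ℝ) (φ : ℕ → X) : wnorm γ φ 0 = ‖φ 0‖ := by
  simp [wnorm]

lemma hist_zero' (x : ℤ → X) (n : ℕ) : hist x n 0 = x n := by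
  simp [hist]

/-- shift identity for `k ≥ n`. -/
lemma wnorm_hist_of_le (γ : ℝ) (x : ℤ → X) {n k : ℕ} (h : n ≤ k) :
    wnorm γ (hist x n) k = wnorm γ (hist x 0) (k - n) * Real.exp (-(γ * n)) := by
  unfold wnorm hist
  have h1 : (n : ℤ) - k = 0 - ((k - n : ℕ) : ℤ) := by push_cast [h]; ring
  have h2 : ((k - n : ℕ) : ℝ) = (k : ℝ) - n := by push_cast [h]; ring
  rw [h1, h2, mul_assoc, ← Real.exp_add]
  ring_nf

lemma wnorm_hist_le_Bnorm {γ : ℝ} (hγ : 0 < γ) {x : ℤ → X} (hx : MemB γ (hist x 0))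
    {n k : ℕ} (h : n ≤ k) : wnorm γ (hist x n) k ≤ Bnorm γ (hist x 0) := by
  rw [wnorm_hist_of_le γ x h]
  have : wnorm γ (hist x 0) (k - n) * Real.exp (-(γ * n)) ≤ Bnorm γ (hist x 0) * 1 := by
    apply mul_le_mul (wnorm_le_Bnorm hx _) _ (Real.exp_pos _).le (Bnorm_nonneg hx)
    exact Real.exp_le_one_iff.mpr (neg_nonpos.mpr (by positivity))
  simpa using this

lemma wnorm_hist_le_norm {γ : ℝ} (hγ : 0 < γ) (x : ℤ → X) {n k : ℕ} (h : k < n) :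
    wnorm γ (hist x n) k ≤ ‖x ((n - k : ℕ) : ℤ)‖ := by
  have hx2 : (n : ℤ) - k = ((n - k : ℕ) : ℤ) := by push_cast [h.le]; ring
  unfold wnorm hist
  rw [hx2]
  nth_rewrite 2 [← mul_one ‖x ((n - k : ℕ) : ℤ)‖]
  exact mul_le_mul_of_nonneg_left (Real.exp_le_one_iff.mpr (neg_nonpos.mpr (by positivity)))
    (norm_nonneg _)

lemma memB_hist {γ : ℝ} (hγ : 0 < γ) {x : ℤ → X} (hx : MemB γ (hist x 0)) (n : ℕ) :
    MemB γ (hist x (n : ℤ)) := by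
  refine ⟨Bnorm γ (hist x 0) + ∑ j ∈ Finset.range (n + 1), ‖x (j : ℤ)‖, ?_⟩
  rintro - ⟨k, rfl⟩
  rcases le_or_gt n k with h | h
  · exact (wnorm_hist_le_Bnorm hγ hx h).trans
      (le_add_of_nonneg_right (Finset.sum_nonneg fun j _ => norm_nonneg _))
  · refine (wnorm_hist_le_norm hγ x h).trans ?_
    refine le_add_of_nonneg_of_le (Bnorm_nonneg hx) ?_
    have hm : n - k ∈ Finset.range (n + 1) := Finset.mem_range.mpr (by omega)
    exact Finset.single_le_sum (f := fun j : ℕ => ‖x (j : ℤ)‖) (s := Finset.range (n + 1))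
      (fun j _ => norm_nonneg _) hm

lemma norm_le_Bnorm_hist {γ : ℝ} (hγ : 0 < γ) {x : ℤ → X} (hx : MemB γ (hist x 0)) (n : ℕ) :
    ‖x (n : ℤ)‖ ≤ Bnorm γ (hist x (n : ℤ)) := by
  have := wnorm_le_Bnorm (memB_hist hγ hx n) 0
  rwa [wnorm_zero, hist_zero'] at this

lemma Bnorm_hist_succ_le {γ : ℝ} (hγ : 0 < γ) {x : ℤ → X} (hx : MemB γ (hist x 0)) (n : ℕ) :
    Bnorm γ (hist x ((n : ℤ) + 1)) ≤
      max ‖x ((n : ℤ) + 1)‖ (Real.exp (-γ) * Bnorm γ (hist x (n : ℤ))) := by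
  apply Bnorm_le
  intro k
  cases k with
  | zero =>
      rw [wnorm_zero]
      exact le_max_of_le_left (le_of_eq (by simp [hist]))
  | succ k =>
      have hk : wnorm γ (hist x ((n : ℤ) + 1)) (k + 1) =
          wnorm γ (hist x n) k * Real.exp (-γ) := by
        unfold wnorm hist
        have h1 : (n : ℤ) + 1 - ((k : ℤ) + 1) = (n : ℤ) - k := by ring
        have h2 : -(γ * ((k : ℝ) + 1)) = -(γ * k) + -γ := by ring
        push_cast
        rw [h1, h2, Real.exp_add, mul_assoc]
      rw [hk]
      refine le_max_of_le_right ?_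
      rw [mul_comm]
      exact mul_le_mul_of_nonneg_left (wnorm_le_Bnorm (memB_hist hγ hx n) k) (Real.exp_pos _).le

lemma ofReal_ciSup_le {w : ℕ → ℝ} {c : ℝ≥0∞} (h : ∀ k, ENNReal.ofReal (w k) ≤ c) :
    ENNReal.ofReal (⨆ k, w k) ≤ c := by
  rcases eq_top_or_lt_top c with rfl | hc
  · exact le_top
  · have hw : ∀ k, w k ≤ c.toReal := fun k =>
      (ENNReal.ofReal_le_iff_le_toReal hc.ne).mp (h k)
    calc ENNReal.ofReal (⨆ k, w k) ≤ ENNReal.ofReal c.toReal :=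
          ENNReal.ofReal_le_ofReal (Real.iSup_le hw ENNReal.toReal_nonneg)
      _ = c := ENNReal.ofReal_toReal hc.ne

lemma lpNorm_top {E : Type*} [NormedAddCommGroup E] (f : ℕ → E) :
    lpNorm ∞ f = ⨆ n, (‖f n‖₊ : ℝ≥0∞) := by
  rw [lpNorm, eLpNorm_exponent_top, eLpNormEssSup_count]
  rfl

lemma lpNorm_rpow {E : Type*} [NormedAddCommGroup E] {p : ℝ≥0∞} (h0 : p ≠ 0) (ht : p ≠ ∞)
    (f : ℕ → E) : lpNorm p f ^ p.toReal = ∑' n, (‖f n‖₊ : ℝ≥0∞) ^ p.toReal := by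
  have hpt : 0 < p.toReal := ENNReal.toReal_pos h0 ht
  rw [lpNorm, eLpNorm_eq_lintegral_rpow_enorm_toReal h0 ht, lintegral_count, one_div,
    ENNReal.rpow_inv_rpow hpt.ne']
  rfl

end AuxLemmas

/-- Proposition 3.10: for `γ > 0` and `x_0 ∈ B^γ`, the history sequence
`(x_n)` is in `ℓ^p(ℤ≥0, B^γ)` iff `(x(n))_{n ≥ 0}` is in `ℓ^p(ℤ≥0, X)`, with the
explicit norm relations. -/
theorem statement11 (γ : ℝ) (hγ : 0 < γ) (p : ℝ≥0∞) (hp : 1 ≤ p)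
    (x : ℤ → X) (hx : MemB γ (hist x 0)) :
    (∀ n : ℕ, MemB γ (hist x (n : ℤ))) ∧
    (lpNorm p (fun n : ℕ => Bnorm γ (hist x (n : ℤ))) < ∞ ↔ lpNorm p (restrict x) < ∞) ∧
    lpNorm p (restrict x) ≤ lpNorm p (fun n : ℕ => Bnorm γ (hist x (n : ℤ))) ∧
    (p = ∞ → lpNorm ∞ (fun n : ℕ => Bnorm γ (hist x (n : ℤ))) =
      max (ENNReal.ofReal (Bnorm γ (hist x 0))) (lpNorm ∞ (restrict x))) ∧
    (p ≠ ∞ → (lpNorm p (fun n : ℕ => Bnorm γ (hist x (n : ℤ)))) ^ p.toReal ≤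
      ENNReal.ofReal (1 - Real.exp (-(p.toReal * γ)))⁻¹ *
        (ENNReal.ofReal (Bnorm γ (hist x 0)) ^ p.toReal +
          lpNorm p (restrict x) ^ p.toReal)) := by
  classical
  have hp0 : p ≠ 0 := fun h => by simp [h] at hp
  have hFnn : ∀ n : ℕ, 0 ≤ Bnorm γ (hist x (n : ℤ)) := fun n => Bnorm_nonneg (memB_hist hγ hx n)
  have hFe : ∀ n : ℕ, (‖Bnorm γ (hist x (n : ℤ))‖₊ : ℝ≥0∞) =
      ENNReal.ofReal (Bnorm γ (hist x (n : ℤ))) := fun n => by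
    rw [← enorm_eq_nnnorm, ← ofReal_norm, Real.norm_of_nonneg (hFnn n)]
  have hxe : ∀ n : ℕ, (‖restrict x n‖₊ : ℝ≥0∞) = ENNReal.ofReal ‖x (n : ℤ)‖ := fun n => by
    rw [← enorm_eq_nnnorm, ← ofReal_norm]; rfl
  have h00 : ((0 : ℕ) : ℤ) = (0 : ℤ) := rfl
  -- Part 3
  have part3 : lpNorm p (restrict x) ≤ lpNorm p (fun n : ℕ => Bnorm γ (hist x (n : ℤ))) := by
    refine eLpNorm_mono fun n => ?_
    calc ‖restrict x n‖ = ‖x (n : ℤ)‖ := rfl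
      _ ≤ Bnorm γ (hist x (n : ℤ)) := norm_le_Bnorm_hist hγ hx n
      _ ≤ ‖Bnorm γ (hist x (n : ℤ))‖ := le_abs_self _
  -- Part 4
  have part4 : lpNorm ∞ (fun n : ℕ => Bnorm γ (hist x (n : ℤ))) =
      max (ENNReal.ofReal (Bnorm γ (hist x 0))) (lpNorm ∞ (restrict x)) := by
    rw [lpNorm_top, lpNorm_top]
    apply le_antisymm
    · refine iSup_le fun n => ?_
      rw [hFe n]
      refine ofReal_ciSup_le fun k => ?_
      rcases le_or_gt n k with h | h
      · exact le_max_of_le_left (ENNReal.ofReal_le_ofReal (wnorm_hist_le_Bnorm hγ hx h))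
      · refine le_max_of_le_right ?_
        calc ENNReal.ofReal (wnorm γ (hist x (n : ℤ)) k)
            ≤ ENNReal.ofReal ‖x ((n - k : ℕ) : ℤ)‖ :=
              ENNReal.ofReal_le_ofReal (wnorm_hist_le_norm hγ x h)
          _ = (‖restrict x (n - k)‖₊ : ℝ≥0∞) := (hxe (n - k)).symm
          _ ≤ ⨆ m, (‖restrict x m‖₊ : ℝ≥0∞) := le_iSup (fun m => (‖restrict x m‖₊ : ℝ≥0∞)) _
    · apply max_le
      · rw [← h00, ← hFe 0]
        exact le_iSup (fun n : ℕ => (‖Bnorm γ (hist x (n : ℤ))‖₊ : ℝ≥0∞)) 0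
      · refine iSup_le fun n => ?_
        rw [hxe n]
        calc ENNReal.ofReal ‖x (n : ℤ)‖ ≤ ENNReal.ofReal (Bnorm γ (hist x (n : ℤ))) :=
            ENNReal.ofReal_le_ofReal (norm_le_Bnorm_hist hγ hx n)
          _ = (‖Bnorm γ (hist x (n : ℤ))‖₊ : ℝ≥0∞) := (hFe n).symm
          _ ≤ ⨆ m : ℕ, (‖Bnorm γ (hist x (m : ℤ))‖₊ : ℝ≥0∞) :=
            le_iSup (fun m : ℕ => (‖Bnorm γ (hist x (m : ℤ))‖₊ : ℝ≥0∞)) n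
  -- Part 5
  have part5 : p ≠ ∞ → (lpNorm p (fun n : ℕ => Bnorm γ (hist x (n : ℤ)))) ^ p.toReal ≤
      ENNReal.ofReal (1 - Real.exp (-(p.toReal * γ)))⁻¹ *
        (ENNReal.ofReal (Bnorm γ (hist x 0)) ^ p.toReal +
          lpNorm p (restrict x) ^ p.toReal) := by
    intro hptop
    set t : ℝ := p.toReal with htdef
    have ht : 0 < t := ENNReal.toReal_pos hp0 hptop
    set q : ℝ≥0∞ := ENNReal.ofReal (Real.exp (-(t * γ))) with hqdef
    have hexp : Real.exp (-γ) ^ t = Real.exp (-(t * γ)) := by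
      rw [Real.rpow_def_of_pos (Real.exp_pos _), Real.log_exp]
      ring_nf
    have hq : (ENNReal.ofReal (Real.exp (-γ))) ^ t = q := by
      rw [ENNReal.ofReal_rpow_of_pos (Real.exp_pos _), hexp]
    have hq1 : q < 1 := by
      rw [hqdef, ← ENNReal.ofReal_one]
      exact ENNReal.ofReal_lt_ofReal_iff_of_nonneg (Real.exp_pos _).le |>.mpr
        (Real.exp_lt_one_iff.mpr (by nlinarith))
    set b : ℕ → ℝ≥0∞ := fun n => (‖Bnorm γ (hist x (n : ℤ))‖₊ : ℝ≥0∞) ^ t with hbdef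
    set a : ℕ → ℝ≥0∞ := fun n => (‖restrict x n‖₊ : ℝ≥0∞) ^ t with hadef
    set D : ℝ≥0∞ := ENNReal.ofReal (Bnorm γ (hist x 0)) ^ t with hDdef
    set A : ℝ≥0∞ := ∑' n, a n with hAdef
    have hb0 : b 0 = D := by rw [hbdef, hDdef]; simp only; rw [hFe 0, h00]
    have hA : lpNorm p (restrict x) ^ t = A := lpNorm_rpow hp0 hptop _
    have key : ∀ n : ℕ, b (n + 1) ≤ a (n + 1) + q * b n := by
      intro n
      have hstep := Bnorm_hist_succ_le hγ hx n
      have hcast : (((n + 1 : ℕ)) : ℤ) = (n : ℤ) + 1 := by push_cast; ring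
      have hb1 : b (n + 1) = ENNReal.ofReal (Bnorm γ (hist x ((n : ℤ) + 1))) ^ t := by
        rw [hbdef]; simp only; rw [hFe (n + 1), hcast]
      have ha1 : a (n + 1) = ENNReal.ofReal ‖x ((n : ℤ) + 1)‖ ^ t := by
        rw [hadef]; simp only; rw [hxe (n + 1), hcast]
      rcases le_total ‖x ((n : ℤ) + 1)‖ (Real.exp (-γ) * Bnorm γ (hist x (n : ℤ))) with hc | hc
      · have : Bnorm γ (hist x ((n : ℤ) + 1)) ≤ Real.exp (-γ) * Bnorm γ (hist x (n : ℤ)) := by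
          rw [max_eq_right hc] at hstep; exact hstep
        calc b (n + 1) ≤ (ENNReal.ofReal (Real.exp (-γ) * Bnorm γ (hist x (n : ℤ)))) ^ t := by
              rw [hb1]; exact ENNReal.rpow_le_rpow (ENNReal.ofReal_le_ofReal this) ht.le
          _ = q * b n := by
              rw [ENNReal.ofReal_mul (Real.exp_pos _).le,
                ENNReal.mul_rpow_of_nonneg _ _ ht.le, hq, hbdef]
              simp only
              rw [hFe n]
          _ ≤ a (n + 1) + q * b n := le_add_self
      · have : Bnorm γ (hist x ((n : ℤ) + 1)) ≤ ‖x ((n : ℤ) + 1)‖ := by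
          rw [max_eq_left hc] at hstep; exact hstep
        calc b (n + 1) ≤ a (n + 1) := by
              rw [hb1, ha1]
              exact ENNReal.rpow_le_rpow (ENNReal.ofReal_le_ofReal this) ht.le
          _ ≤ a (n + 1) + q * b n := le_self_add
    have hSle : ∀ N : ℕ, ∑ n ∈ Finset.range N, b n ≤
        D + A + q * ∑ n ∈ Finset.range N, b n := by
      intro N
      cases N with
      | zero => simp
      | succ M =>
          have e1 : ∑ n ∈ Finset.range (M + 1), b n =
              (∑ n ∈ Finset.range M, b (n + 1)) + b 0 := Finset.sum_range_succ' b M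
          have e2 : ∑ n ∈ Finset.range M, b (n + 1) ≤
              (∑ n ∈ Finset.range M, a (n + 1)) + q * ∑ n ∈ Finset.range M, b n := by
            calc ∑ n ∈ Finset.range M, b (n + 1)
                ≤ ∑ n ∈ Finset.range M, (a (n + 1) + q * b n) :=
                  Finset.sum_le_sum fun n _ => key n
              _ = (∑ n ∈ Finset.range M, a (n + 1)) + ∑ n ∈ Finset.range M, q * b n :=
                  Finset.sum_add_distrib
              _ = (∑ n ∈ Finset.range M, a (n + 1)) + q * ∑ n ∈ Finset.range M, b n := by
                  rw [Finset.mul_sum]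
          have e3 : ∑ n ∈ Finset.range M, a (n + 1) ≤ A := by
            rw [hAdef]
            have : ∑ n ∈ Finset.range M, a (n + 1) =
                ∑ m ∈ (Finset.range M).map ⟨Nat.succ, Nat.succ_injective⟩, a m := by
              rw [Finset.sum_map]; rfl
            rw [this]
            exact ENNReal.sum_le_tsum _
          have e4 : q * ∑ n ∈ Finset.range M, b n ≤ q * ∑ n ∈ Finset.range (M + 1), b n :=
            mul_le_mul_right (Finset.sum_le_sum_of_subset
              (Finset.range_subset_range.mpr (Nat.le_succ M))) q
          calc ∑ n ∈ Finset.range (M + 1), b n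
              = (∑ n ∈ Finset.range M, b (n + 1)) + b 0 := e1
            _ ≤ ((∑ n ∈ Finset.range M, a (n + 1)) + q * ∑ n ∈ Finset.range M, b n) + D := by
                rw [hb0]; exact add_le_add_left e2 D
            _ ≤ (A + q * ∑ n ∈ Finset.range (M + 1), b n) + D :=
                add_le_add_left (add_le_add e3 e4) D
            _ = D + A + q * ∑ n ∈ Finset.range (M + 1), b n := by ring
    have h1q0 : (1 : ℝ≥0∞) - q ≠ 0 := (tsub_pos_of_lt hq1).ne'
    have h1qtop : (1 : ℝ≥0∞) - q ≠ ∞ :=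
      ne_top_of_le_ne_top ENNReal.one_ne_top tsub_le_self
    have hbound : ∀ N : ℕ, ∑ n ∈ Finset.range N, b n ≤ (1 - q)⁻¹ * (D + A) := by
      intro N
      by_cases hDA : D + A = ∞
      · rw [hDA, ENNReal.mul_top (ENNReal.inv_ne_zero.mpr h1qtop)]
        exact le_top
      · have hSfin : ∑ n ∈ Finset.range N, b n ≠ ∞ := by
          rw [ENNReal.sum_ne_top]
          intro n _
          exact ENNReal.rpow_ne_top_of_nonneg ht.le ENNReal.coe_ne_top
        have hsub : (∑ n ∈ Finset.range N, b n) * (1 - q) ≤ D + A := by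
          rw [ENNReal.mul_sub fun _ _ => hSfin, mul_one]
          refine tsub_le_iff_right.mpr ?_
          calc ∑ n ∈ Finset.range N, b n
              ≤ D + A + q * ∑ n ∈ Finset.range N, b n := hSle N
            _ = D + A + (∑ n ∈ Finset.range N, b n) * q := by rw [mul_comm]
        have := (ENNReal.le_div_iff_mul_le (Or.inl h1q0) (Or.inl h1qtop)).mpr hsub
        rwa [ENNReal.div_eq_inv_mul] at this
    have hsum : lpNorm p (fun n : ℕ => Bnorm γ (hist x (n : ℤ))) ^ t = ∑' n, b n :=
      lpNorm_rpow hp0 hptop _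
    have hfinal : ∑' n, b n ≤ (1 - q)⁻¹ * (D + A) := by
      rw [ENNReal.tsum_eq_iSup_nat]
      exact iSup_le hbound
    have hqof : (1 : ℝ≥0∞) - q = ENNReal.ofReal (1 - Real.exp (-(t * γ))) := by
      rw [ENNReal.ofReal_sub _ (Real.exp_pos _).le, ENNReal.ofReal_one, hqdef]
    have hinv : (1 - q)⁻¹ = ENNReal.ofReal (1 - Real.exp (-(t * γ)))⁻¹ := by
      rw [hqof, ← ENNReal.ofReal_inv_of_pos]
      have : Real.exp (-(t * γ)) < 1 := Real.exp_lt_one_iff.mpr (by nlinarith)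
      linarith
    rw [hsum, hA, ← hinv]
    exact hfinal
  refine ⟨memB_hist hγ hx, ?_, part3, fun _ => part4, part5⟩
  constructor
  · intro h
    exact lt_of_le_of_lt part3 h
  · intro h
    by_cases hptop : p = ∞
    · rw [hptop, part4]
      rw [hptop] at h
      exact max_lt (ENNReal.ofReal_lt_top) h
    · have ht : 0 < p.toReal := ENNReal.toReal_pos hp0 hptop
      have h5 := part5 hptop
      have hrhs : ENNReal.ofReal (1 - Real.exp (-(p.toReal * γ)))⁻¹ *
          (ENNReal.ofReal (Bnorm γ (hist x 0)) ^ p.toReal +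
            lpNorm p (restrict x) ^ p.toReal) ≠ ∞ := by
        apply ENNReal.mul_ne_top ENNReal.ofReal_ne_top
        apply ENNReal.add_ne_top.mpr
        constructor
        · exact ENNReal.rpow_ne_top_of_nonneg ht.le ENNReal.ofReal_ne_top
        · exact ENNReal.rpow_ne_top_of_nonneg ht.le h.ne
      have : lpNorm p (fun n : ℕ => Bnorm γ (hist x (n : ℤ))) ^ p.toReal ≠ ∞ :=
        fun hc => hrhs (top_le_iff.mp (hc ▸ h5))
      by_contra hcon
      push_neg at hcon
      rw [top_le_iff.mp hcon, ENNReal.top_rpow_of_pos ht] at this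
      exact this rfl

end BP
end
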